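/- arXiv:1509.07272 — 3 statements merged into one kernel-verified Lean document; each statement's English description precedes it below -/
import Mathlib

section
/- Let F be a lift of an orientation-preserving circle homeomorphism. If the induced circle map has a periodic point of prime period q, then every periodic point of the induced circle map has the same period q. -/
/-!
Since `F` commutes with integer translations, a point with `F^[q] x = x + p` forces the
translation number of `F` to be `p / q`. Minimality of `q` makes this fraction reduced: if
`d = gcd p q`, then `(F^[q/d])^[d] x = x + d * (p/d)`, and for a monotone degree one lift this
already gives `F^[q/d] x = x + p/d`. So every minimal period is the denominator of the same
rational number, the translation number.
-/

namespace CircleDeg1Lift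

variable (f : CircleDeg1Lift) {x : ℝ} {n : ℕ} {m : ℤ}

theorem gcd_eq_one_of_minimal_period (hn : 0 < n) (h : f^[n] x = x + m)
    (hmin : ∀ n' : ℕ, 0 < n' → (∃ m' : ℤ, f^[n'] x = x + m') → n ≤ n') :
    Int.gcd m n = 1 := by
  set d := Int.gcd m n
  have hd : 0 < d := Int.gcd_pos_of_ne_zero_right m (by exact_mod_cast hn.ne')
  have hdn : d ∣ n := by exact_mod_cast Int.gcd_dvd_right m n
  have hdm : (d : ℤ) ∣ m := Int.gcd_dvd_left m n
  clear_value d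
  obtain ⟨n₀, rfl⟩ := hdn
  obtain ⟨m₀, rfl⟩ := hdm
  have hn₀ : 0 < n₀ := Nat.pos_of_mul_pos_left hn
  have h₀ : (f ^ n₀) x = x + m₀ := by
    rw [← (f ^ n₀).iterate_pos_eq_iff hd, ← coe_pow, ← pow_mul, coe_pow, mul_comm n₀]
    exact_mod_cast h
  have hle : d * n₀ ≤ n₀ := hmin n₀ hn₀ ⟨m₀, by rwa [← coe_pow]⟩
  nlinarith

theorem exists_rat_translationNumber_den_eq_of_minimal_period (hn : 0 < n)
    (h : f^[n] x = x + m)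
    (hmin : ∀ n' : ℕ, 0 < n' → (∃ m' : ℤ, f^[n'] x = x + m') → n ≤ n') :
    ∃ r : ℚ, f.translationNumber = r ∧ r.den = n := by
  refine ⟨m / n, ?_, ?_⟩
  · rw [f.translationNumber_of_map_pow_eq_add_int (by rwa [coe_pow]) hn]
    norm_cast
  · exact_mod_cast Rat.den_div_eq_of_coprime (b := n) (by exact_mod_cast hn)
      (f.gcd_eq_one_of_minimal_period hn h hmin)

end CircleDeg1Lift

theorem periodic_points_same_period_general
    (F : ℝ → ℝ) (hmono : StrictMono F)
    (hper : ∀ x : ℝ, F (x + 1) = F x + 1)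
    (q : ℕ) (hq : 0 < q) (x : ℝ) (p : ℤ)
    (hx : F^[q] x = x + (p : ℝ))
    (hmin : ∀ q' : ℕ, 0 < q' → (∃ p' : ℤ, F^[q'] x = x + (p' : ℝ)) → q ≤ q')
    (y : ℝ) (q' : ℕ) (hq' : 0 < q') (p' : ℤ)
    (hy : F^[q'] y = y + (p' : ℝ))
    (hmin' : ∀ q'' : ℕ, 0 < q'' → (∃ p'' : ℤ, F^[q''] y = y + (p'' : ℝ)) → q' ≤ q'') :
    q' = q := by
  let f : CircleDeg1Lift := ⟨⟨F, hmono.monotone⟩, hper⟩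
  obtain ⟨r, hr, rfl⟩ := f.exists_rat_translationNumber_den_eq_of_minimal_period hq hx hmin
  obtain ⟨r', hr', rfl⟩ := f.exists_rat_translationNumber_den_eq_of_minimal_period hq' hy hmin'
  rw [Rat.cast_injective (hr'.symm.trans hr)]

/-- If the induced circle map has a periodic point of prime period q, then
every periodic point has the same prime period q. -/
theorem periodic_points_same_period
    (F : ℝ → ℝ) (hcont : Continuous F) (hmono : StrictMono F)
    (hper : ∀ x : ℝ, F (x + 1) = F x + 1)
    (q : ℕ) (hq : 0 < q) (x : ℝ) (p : ℤ)
    (hx : F^[q] x = x + (p : ℝ))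
    (hmin : ∀ q' : ℕ, 0 < q' → (∃ p' : ℤ, F^[q'] x = x + (p' : ℝ)) → q ≤ q')
    (y : ℝ) (q' : ℕ) (hq' : 0 < q') (p' : ℤ)
    (hy : F^[q'] y = y + (p' : ℝ))
    (hmin' : ∀ q'' : ℕ, 0 < q'' → (∃ p'' : ℤ, F^[q''] y = y + (p'' : ℝ)) → q' ≤ q'') :
    q' = q :=
  periodic_points_same_period_general F hmono hper q hq x p hx hmin y q' hq' p' hy hmin'
end

section
/- Interval Newton existence and uniqueness: Let g : ℝ → ℝ be continuously differentiable on a compact interval [a,b], let ž ∈ [a,b], and suppose every derivative value g'(z) for z ∈ [a,b] lies in an interval [c,d] with 0 ∉ [c,d]. If the interval Newton image N = { ž − g(ž)/m : m ∈ [c,d] } is contained in [a,b], then there exists a unique z* ∈ [a,b] with g(z*) = 0. -/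
/-!
Assume `0 < c ≤ g'` (the case `d < 0` reduces to it by replacing `g` with `-g`). Then `g` is
strictly increasing, which gives uniqueness, and `h x = g x - c x` is monotone. For the Newton
point `w = ž - g(ž)/c` one has `g w = h w - h ž` and `g ž = c (ž - w)`, so `g ž` and `g w`
have opposite signs, and the intermediate value theorem on `[ž, w]` produces a zero.
-/

open Set

section NewtonStep

variable {g g' : ℝ → ℝ} {D : Set ℝ} {c : ℝ}

theorem monotoneOn_sub_mul_of_le_hasDerivAt (hD : Convex ℝ D)
    (hderiv : ∀ z ∈ D, HasDerivAt g (g' z) z) (hle : ∀ z ∈ D, c ≤ g' z) :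
    MonotoneOn (fun x => g x - c * x) D := by
  have hderiv' : ∀ z ∈ D, HasDerivAt (fun x => g x - c * x) (g' z - c) z := fun z hz => by
    have := (hderiv z hz).sub ((hasDerivAt_id' z).const_mul c)
    rwa [mul_one] at this
  refine monotoneOn_of_hasDerivWithinAt_nonneg hD
    (fun z hz => (hderiv' z hz).continuousAt.continuousWithinAt)
    (fun z hz => (hderiv' z (interior_subset hz)).hasDerivWithinAt)
    (fun z hz => sub_nonneg.mpr (hle z (interior_subset hz)))

theorem zero_mem_uIcc_newton_step (hD : Convex ℝ D) (hderiv : ∀ z ∈ D, HasDerivAt g (g' z) z)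
    (hc : 0 < c) (hle : ∀ z ∈ D, c ≤ g' z) {x : ℝ} (hx : x ∈ D) (hw : x - g x / c ∈ D) :
    (0 : ℝ) ∈ uIcc (g x) (g (x - g x / c)) := by
  set w := x - g x / c
  have hmono := monotoneOn_sub_mul_of_le_hasDerivAt hD hderiv hle
  have hgx : g x = c * (x - w) := by simp only [w]; field_simp; ring
  have hgw : g w = (g w - c * w) - (g x - c * x) := by linear_combination hgx
  rw [mem_uIcc]
  rcases le_total x w with hxw | hwx
  · have hh := hmono hx hw hxw
    exact Or.inl ⟨hgx ▸ mul_nonpos_of_nonneg_of_nonpos hc.le (sub_nonpos.mpr hxw),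
      by rw [hgw]; linarith⟩
  · have hh := hmono hw hx hwx
    exact Or.inr ⟨by rw [hgw]; linarith,
      hgx ▸ mul_nonneg hc.le (sub_nonneg.mpr hwx)⟩

theorem existsUnique_zero_of_newton_step_mem (hD : Convex ℝ D)
    (hderiv : ∀ z ∈ D, HasDerivAt g (g' z) z) (hc : 0 < c) (hle : ∀ z ∈ D, c ≤ g' z)
    {x : ℝ} (hx : x ∈ D) (hw : x - g x / c ∈ D) :
    ∃! z, z ∈ D ∧ g z = 0 := by
  have hcont : ContinuousOn g D := fun z hz => (hderiv z hz).continuousAt.continuousWithinAt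
  have hsub : uIcc x (x - g x / c) ⊆ D := hD.ordConnected.uIcc_subset hx hw
  obtain ⟨z, hz, hz0⟩ := intermediate_value_uIcc (hcont.mono hsub)
    (zero_mem_uIcc_newton_step hD hderiv hc hle hx hw)
  have hstrict : StrictMonoOn g D := strictMonoOn_of_hasDerivWithinAt_pos hD hcont
    (fun z hz => (hderiv z (interior_subset hz)).hasDerivWithinAt)
    (fun z hz => hc.trans_le (hle z (interior_subset hz)))
  exact ⟨z, ⟨hsub hz, hz0⟩, fun y hy => hstrict.injOn hy.1 (hsub hz) (hy.2.trans hz0.symm)⟩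

end NewtonStep

theorem interval_newton_existence_uniqueness_general
    (g g' : ℝ → ℝ) (a b c d zc : ℝ)
    (hzc : zc ∈ Set.Icc a b)
    (hderiv : ∀ z ∈ Set.Icc a b, HasDerivAt g (g' z) z)
    (h0 : (0 : ℝ) ∉ Set.Icc c d)
    (hmem : ∀ z ∈ Set.Icc a b, g' z ∈ Set.Icc c d)
    (hN : {w : ℝ | ∃ m ∈ Set.Icc c d, w = zc - g zc / m} ⊆ Set.Icc a b) :
    ∃! z : ℝ, z ∈ Set.Icc a b ∧ g z = 0 := by
  have hcd : c ≤ d := (hmem zc hzc).1.trans (hmem zc hzc).2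
  rcases not_and_or.mp h0 with hc | hd
  · exact existsUnique_zero_of_newton_step_mem (convex_Icc a b) hderiv (not_le.mp hc)
      (fun z hz => (hmem z hz).1) hzc (hN ⟨c, left_mem_Icc.mpr hcd, rfl⟩)
  · have hw : zc - -g zc / -d ∈ Icc a b := by
      rw [neg_div_neg_eq]; exact hN ⟨d, right_mem_Icc.mpr hcd, rfl⟩
    simpa using existsUnique_zero_of_newton_step_mem (g := fun x => -g x) (convex_Icc a b)
      (fun z hz => (hderiv z hz).neg) (neg_pos.mpr (not_le.mp hd))
      (fun z hz => neg_le_neg (hmem z hz).2) hzc hw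

/-- Interval Newton existence and uniqueness: if the interval Newton image
`N = {ž − g(ž)/m : m ∈ [c,d]}` is contained in `[a,b]`, where the derivative
of g on [a,b] has values in [c,d] with 0 ∉ [c,d], then g has a unique zero
in [a,b]. -/
theorem interval_newton_existence_uniqueness
    (g g' : ℝ → ℝ) (a b c d zc : ℝ)
    (hab : a ≤ b) (hcd : c ≤ d)
    (hzc : zc ∈ Set.Icc a b)
    (hderiv : ∀ z ∈ Set.Icc a b, HasDerivAt g (g' z) z)
    (hcontd : ContinuousOn g' (Set.Icc a b))
    (h0 : (0 : ℝ) ∉ Set.Icc c d)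
    (hmem : ∀ z ∈ Set.Icc a b, g' z ∈ Set.Icc c d)
    (hN : {w : ℝ | ∃ m ∈ Set.Icc c d, w = zc - g zc / m} ⊆ Set.Icc a b) :
    ∃! z : ℝ, z ∈ Set.Icc a b ∧ g z = 0 :=
  interval_newton_existence_uniqueness_general g g' a b c d zc hzc hderiv h0 hmem hN
end

section
/- Interval Newton nonexistence: Let g : ℝ → ℝ be continuously differentiable on [a,b], ž ∈ [a,b], and suppose g'(z) ∈ [c,d] for all z ∈ [a,b] with 0 ∉ [c,d]. If the set N = { ž − g(ž)/m : m ∈ [c,d] } is disjoint from [a,b], then g has no zero in [a,b]. -/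
/-! By the mean value theorem a zero `z` of `g` satisfies `g ž = g' ξ * (ž - z)` for some `ξ`
between `z` and `ž`, so `z = ž - g ž / g' ξ` is itself a point of `N`. -/

open Set

theorem exists_mem_uIcc_sub_eq_mul_sub {f f' : ℝ → ℝ} {x y : ℝ}
    (hf : ∀ z ∈ uIcc x y, HasDerivAt f (f' z) z) :
    ∃ ξ ∈ uIcc x y, f y - f x = f' ξ * (y - x) := by
  wlog hxy : x ≤ y generalizing x y
  · obtain ⟨ξ, hξ, h⟩ := this (uIcc_comm x y ▸ hf) (le_of_not_ge hxy)
    exact ⟨ξ, uIcc_comm y x ▸ hξ, by linarith⟩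
  rw [uIcc_of_le hxy] at hf ⊢
  rcases hxy.eq_or_lt with rfl | hlt
  · exact ⟨x, left_mem_Icc.mpr le_rfl, by simp⟩
  obtain ⟨ξ, hξ, hslope⟩ := exists_hasDerivAt_eq_slope f f' hlt
    (fun z hz => (hf z hz).continuousAt.continuousWithinAt)
    (fun z hz => hf z (Ioo_subset_Icc_self hz))
  refine ⟨ξ, Ioo_subset_Icc_self hξ, ?_⟩
  rw [hslope, div_mul_cancel₀ _ (sub_ne_zero.mpr hlt.ne')]

theorem interval_newton_nonexistence_general
    (g g' : ℝ → ℝ) (a b c d zc : ℝ)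
    (hzc : zc ∈ Set.Icc a b)
    (hderiv : ∀ z ∈ Set.Icc a b, HasDerivAt g (g' z) z)
    (h0 : (0 : ℝ) ∉ Set.Icc c d)
    (hmem : ∀ z ∈ Set.Icc a b, g' z ∈ Set.Icc c d)
    (hN : Disjoint {w : ℝ | ∃ m ∈ Set.Icc c d, w = zc - g zc / m} (Set.Icc a b)) :
    ∀ z ∈ Set.Icc a b, g z ≠ 0 := by
  intro z hz hgz
  have hsub : uIcc z zc ⊆ Icc a b := uIcc_subset_Icc hz hzc
  obtain ⟨ξ, hξ, hslope⟩ :=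
    exists_mem_uIcc_sub_eq_mul_sub fun w hw => hderiv w (hsub hw)
  have hm : g' ξ ∈ Icc c d := hmem ξ (hsub hξ)
  have hm0 : g' ξ ≠ 0 := fun h => h0 (h ▸ hm)
  have hnewton : z = zc - g zc / g' ξ := by
    rw [hgz, sub_zero] at hslope
    rw [hslope, mul_div_cancel_left₀ _ hm0]
    ring
  exact disjoint_left.mp hN ⟨g' ξ, hm, hnewton⟩ hz

/-- Interval Newton nonexistence: if the interval Newton image
`N = {ž − g(ž)/m : m ∈ [c,d]}` is disjoint from `[a,b]`, where the derivative
of g on [a,b] has values in [c,d] with 0 ∉ [c,d], then g has no zero in [a,b]. -/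
theorem interval_newton_nonexistence
    (g g' : ℝ → ℝ) (a b c d zc : ℝ)
    (hab : a ≤ b) (hcd : c ≤ d)
    (hzc : zc ∈ Set.Icc a b)
    (hderiv : ∀ z ∈ Set.Icc a b, HasDerivAt g (g' z) z)
    (hcontd : ContinuousOn g' (Set.Icc a b))
    (h0 : (0 : ℝ) ∉ Set.Icc c d)
    (hmem : ∀ z ∈ Set.Icc a b, g' z ∈ Set.Icc c d)
    (hN : Disjoint {w : ℝ | ∃ m ∈ Set.Icc c d, w = zc - g zc / m} (Set.Icc a b)) :
    ∀ z ∈ Set.Icc a b, g z ≠ 0 :=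
  interval_newton_nonexistence_general g g' a b c d zc hzc hderiv h0 hmem hN
end
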